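/- Drinfeld-double form of the Jacobi identity at four points: for four modes with k₁+k₂+k₃+k₄ = 0, B([ξ₁,ξ₂]_YM, [ξ₃,ξ₄]_YM) + B([ξ₃,ξ₁]_YM, [ξ₂,ξ₄]_YM) + B([ξ₁,ξ₄]_YM, [ξ₂,ξ₃]_YM) = B([ξ₁,ξ₂]^⊥, [ξ₃,ξ₄]^⊥) + B([ξ₃,ξ₁]^⊥, [ξ₂,ξ₄]^⊥) + B([ξ₁,ξ₄]^⊥, [ξ₂,ξ₃]^⊥). -/
import Mathlib


namespace Stmt16

variable {V : Type*} [AddCommGroup V] [Module ℝ V]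

/-- The YM bracket of modes (polarization part). -/
def ymPol (B : LinearMap.BilinForm ℝ V) (p q : V × V) : V :=
  (2 * B p.1 q.2) • q.1 - (2 * B q.1 p.2) • p.1 + B p.1 q.1 • (p.2 - q.2)
    + B p.1 p.2 • q.1 - B q.1 q.2 • p.1

/-- The perpendicular bracket of modes (polarization part). -/
def perpPol (B : LinearMap.BilinForm ℝ V) (p q : V × V) : V :=
  B p.1 q.1 • (p.2 - q.2) + B p.1 p.2 • q.1 - B q.1 q.2 • p.1

/-- Drinfeld-double form of the Jacobi identity at four points: for four modes
with `k₁+k₂+k₃+k₄ = 0`, the sum of YM-bracket pairings equals the sum of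
perpendicular-bracket pairings. -/
theorem dd_jacobi_four_points (B : LinearMap.BilinForm ℝ V) (hB : B.IsSymm)
    (ξ₁ k₁ ξ₂ k₂ ξ₃ k₃ ξ₄ k₄ : V) (h : k₁ + k₂ + k₃ + k₄ = 0) :
    B (ymPol B (ξ₁, k₁) (ξ₂, k₂)) (ymPol B (ξ₃, k₃) (ξ₄, k₄))
      + B (ymPol B (ξ₃, k₃) (ξ₁, k₁)) (ymPol B (ξ₂, k₂) (ξ₄, k₄))
      + B (ymPol B (ξ₁, k₁) (ξ₄, k₄)) (ymPol B (ξ₂, k₂) (ξ₃, k₃))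
      = B (perpPol B (ξ₁, k₁) (ξ₂, k₂)) (perpPol B (ξ₃, k₃) (ξ₄, k₄))
        + B (perpPol B (ξ₃, k₃) (ξ₁, k₁)) (perpPol B (ξ₂, k₂) (ξ₄, k₄))
        + B (perpPol B (ξ₁, k₁) (ξ₄, k₄)) (perpPol B (ξ₂, k₂) (ξ₃, k₃)) := by
  have hk4 : k₄ = -(k₁ + k₂ + k₃) := by
    linear_combination (norm := abel) h
  subst hk4
  simp only [ymPol, perpPol, map_add, map_sub, map_smul, map_neg,
    LinearMap.add_apply, LinearMap.sub_apply, LinearMap.smul_apply,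
    LinearMap.neg_apply, smul_eq_mul]
  simp only [(hB.eq ξ₂ ξ₁ : B ξ₂ ξ₁ = B ξ₁ ξ₂),
    (hB.eq ξ₃ ξ₁ : B ξ₃ ξ₁ = B ξ₁ ξ₃),
    (hB.eq ξ₄ ξ₁ : B ξ₄ ξ₁ = B ξ₁ ξ₄),
    (hB.eq k₁ ξ₁ : B k₁ ξ₁ = B ξ₁ k₁),
    (hB.eq k₂ ξ₁ : B k₂ ξ₁ = B ξ₁ k₂),
    (hB.eq k₃ ξ₁ : B k₃ ξ₁ = B ξ₁ k₃),
    (hB.eq ξ₃ ξ₂ : B ξ₃ ξ₂ = B ξ₂ ξ₃),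
    (hB.eq ξ₄ ξ₂ : B ξ₄ ξ₂ = B ξ₂ ξ₄),
    (hB.eq k₁ ξ₂ : B k₁ ξ₂ = B ξ₂ k₁),
    (hB.eq k₂ ξ₂ : B k₂ ξ₂ = B ξ₂ k₂),
    (hB.eq k₃ ξ₂ : B k₃ ξ₂ = B ξ₂ k₃),
    (hB.eq ξ₄ ξ₃ : B ξ₄ ξ₃ = B ξ₃ ξ₄),
    (hB.eq k₁ ξ₃ : B k₁ ξ₃ = B ξ₃ k₁),
    (hB.eq k₂ ξ₃ : B k₂ ξ₃ = B ξ₃ k₂),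
    (hB.eq k₃ ξ₃ : B k₃ ξ₃ = B ξ₃ k₃),
    (hB.eq k₁ ξ₄ : B k₁ ξ₄ = B ξ₄ k₁),
    (hB.eq k₂ ξ₄ : B k₂ ξ₄ = B ξ₄ k₂),
    (hB.eq k₃ ξ₄ : B k₃ ξ₄ = B ξ₄ k₃),
    (hB.eq k₂ k₁ : B k₂ k₁ = B k₁ k₂),
    (hB.eq k₃ k₁ : B k₃ k₁ = B k₁ k₃),
    (hB.eq k₃ k₂ : B k₃ k₂ = B k₂ k₃)]
  ring

end Stmt16
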